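/- Let ρ_DS = ∑_{0 ≤ i ≤ j < d} p_{ij} |D_{ij}⟩⟨D_{ij}| be a diagonal symmetric state on ℂ^d ⊗ ℂ^d, with p_{ij} ≥ 0 and ∑_{i≤j} p_{ij} = 1. Then the partial transpose ρ_DS^Γ (defined by ρ^Γ((i,k),(j,l)) = ρ((i,l),(j,k))) is positive semidefinite if and only if the d×d matrix M_d(ρ_DS), with entries M_d(ρ_DS)_{ii} = p_{ii} and M_d(ρ_DS)_{ij} = p_{ij}/2 for i ≠ j, is positive semidefinite; since M_d(ρ_DS) is automatically entrywise nonnegative, ρ_DS is PPT if and only if M_d(ρ_DS) is doubly nonnegative. -/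

import Mathlib

open Matrix ComplexOrder

/-- The Dicke state `|D_{ij}⟩` on `ℂ^d ⊗ ℂ^d`: `|D_{ii}⟩ = |ii⟩` and
`|D_{ij}⟩ = (|ij⟩ + |ji⟩)/√2` for `i ≠ j`. -/
noncomputable def dicke {d : ℕ} (i j : Fin d) : (Fin d × Fin d) → ℂ :=
  if i = j then fun x => if x = (i, i) then 1 else 0
  else fun x => if x = (i, j) ∨ x = (j, i) then ((Real.sqrt 2)⁻¹ : ℝ) else 0

/-- The diagonal symmetric state `ρ_DS = ∑_{0 ≤ i ≤ j < d} p_{ij} |D_{ij}⟩⟨D_{ij}|`. -/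
noncomputable def rhoDS {d : ℕ} (p : Fin d → Fin d → ℝ) :
    Matrix (Fin d × Fin d) (Fin d × Fin d) ℂ :=
  ∑ i : Fin d, ∑ j : Fin d,
    if i ≤ j then (p i j : ℂ) • Matrix.vecMulVec (dicke i j) (star (dicke i j)) else 0

/-- The matrix `M_d(ρ_DS)`: diagonal entries `p_{ii}`, off-diagonal entries `p_{ij}/2`. -/
noncomputable def Mds {d : ℕ} (p : Fin d → Fin d → ℝ) : Matrix (Fin d) (Fin d) ℝ :=
  Matrix.of fun i j => if i = j then p i i else (if i ≤ j then p i j else p j i) / 2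

/-- The partial transpose `ρ^Γ((i,k),(j,l)) = ρ((i,l),(j,k))`. -/
def partialTransposeB {d : ℕ}
    (ρ : Matrix (Fin d × Fin d) (Fin d × Fin d) ℂ) :
    Matrix (Fin d × Fin d) (Fin d × Fin d) ℂ :=
  Matrix.of fun x y => ρ (x.1, y.2) (y.1, x.2)

/-!
Entrywise, `ρ_DS (x, y)` vanishes unless `y = x` or `y = x.swap`, where it equals
`M_d(x₁, x₂)`. Hence `ρ^Γ` is `V M_d V*`, with `V |i⟩ = |ii⟩`, plus a diagonal matrix carrying
the nonnegative entries `M_d(i, j)`, `i ≠ j`, on the `|ij⟩`; so `M_d ≥ 0` gives `ρ^Γ ≥ 0`.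
Conversely, `M_d` is the principal submatrix of `ρ^Γ` on the `|ii⟩`.
-/

open scoped MatrixOrder in
theorem Matrix.posSemidef_map_ofReal_iff {n : Type*} [Fintype n] {M : Matrix n n ℝ} :
    (M.map ((↑) : ℝ → ℂ)).PosSemidef ↔ M.PosSemidef := by
  classical
  refine ⟨fun h => ?_, fun hM => ?_⟩
  · refine .of_dotProduct_mulVec_nonneg ?_ fun x => ?_
    · ext i j
      simpa [Complex.conj_ofReal] using congrFun (congrFun h.isHermitian i) j
    · have hx := h.dotProduct_mulVec_nonneg (fun i => (x i : ℂ))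
      have hx_real : star (fun i => (x i : ℂ)) ⬝ᵥ M.map (↑) *ᵥ (fun i => (x i : ℂ))
          = ((star x ⬝ᵥ M *ᵥ x : ℝ) : ℂ) := by
        simp [dotProduct, mulVec, Complex.conj_ofReal]
      rw [hx_real] at hx
      exact_mod_cast hx
  · obtain ⟨B, rfl⟩ := CStarAlgebra.nonneg_iff_eq_star_mul_self.mp hM.nonneg
    have hB : (star B * B).map ((↑) : ℝ → ℂ) = (B.map (↑))ᴴ * B.map (↑) := by
      ext i j
      simp [mul_apply, Complex.conj_ofReal]
    rw [hB]
    exact posSemidef_conjTranspose_mul_self _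

def diagEmbedding (n : Type*) [DecidableEq n] : Matrix (n × n) n ℂ :=
  of fun x i => if x = (i, i) then 1 else 0

theorem diagEmbedding_mul_mul_conjTranspose_apply {n : Type*} [Fintype n] [DecidableEq n]
    (A : Matrix n n ℂ) (x y : n × n) :
    (diagEmbedding n * A * (diagEmbedding n)ᴴ) x y =
      if x.1 = x.2 ∧ y.1 = y.2 then A x.1 y.1 else 0 := by
  obtain ⟨a, b⟩ := x
  obtain ⟨c, e⟩ := y
  by_cases hab : a = b <;> simp [diagEmbedding, mul_apply, apply_ite star, ite_and, eq_comm, hab]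

theorem Mds_comm {d : ℕ} (p : Fin d → Fin d → ℝ) (i j : Fin d) : Mds p i j = Mds p j i := by
  rcases lt_trichotomy i j with h | rfl | h
  · simp [Mds, h.ne, h.ne', h.le, h.not_ge]
  · rfl
  · simp [Mds, h.ne, h.ne', h.le, h.not_ge]

theorem Mds_nonneg {d : ℕ} {p : Fin d → Fin d → ℝ} (hp : ∀ i j : Fin d, i ≤ j → 0 ≤ p i j)
    (i j : Fin d) : 0 ≤ Mds p i j := by
  simp only [Mds, of_apply]
  split_ifs with _ hij
  · exact hp i i le_rfl
  · exact div_nonneg (hp i j hij) zero_le_two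
  · exact div_nonneg (hp j i (le_of_not_ge hij)) zero_le_two

theorem Mds_of_le {d : ℕ} (p : Fin d → Fin d → ℝ) {i j : Fin d} (h : i ≤ j) :
    Mds p i j = p i j * (if i = j then 1 else (√2)⁻¹) ^ 2 := by
  by_cases hij : i = j
  · simp [Mds, hij]
  · simp only [Mds, of_apply, hij, h, if_false, if_true, inv_pow, Real.sq_sqrt zero_le_two]
    ring

theorem dicke_apply {d : ℕ} (i j : Fin d) (x : Fin d × Fin d) :
    dicke i j x =
      if x = (i, j) ∨ x = (j, i) then ((if i = j then 1 else (√2)⁻¹ : ℝ) : ℂ) else 0 := by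
  unfold dicke
  split_ifs <;> simp_all

theorem rhoDS_apply_eq_sum {d : ℕ} (p : Fin d → Fin d → ℝ) (x y : Fin d × Fin d) :
    rhoDS p x y = ∑ i, ∑ j, if i ≤ j then (p i j : ℂ) * (dicke i j x * dicke i j y) else 0 := by
  simp only [rhoDS, Matrix.sum_apply]
  refine Finset.sum_congr rfl fun i _ => Finset.sum_congr rfl fun j _ => ?_
  split_ifs
  · simp [vecMulVec_apply, dicke_apply, apply_ite star, Complex.conj_ofReal]
  · rfl

theorem rhoDS_apply_of_le {d : ℕ} (p : Fin d → Fin d → ℝ) {i j : Fin d} (hij : i ≤ j)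
    {x : Fin d × Fin d} (hx : x = (i, j) ∨ x = (j, i)) (y : Fin d × Fin d) :
    rhoDS p x y = if y = (i, j) ∨ y = (j, i) then (Mds p i j : ℂ) else 0 := by
  rw [rhoDS_apply_eq_sum, ← Fintype.sum_prod_type', Finset.sum_eq_single (i, j)]
  · simp only [if_pos hij, dicke_apply, if_pos hx, Mds_of_le p hij]
    split_ifs <;> push_cast <;> ring
  · rintro ⟨k, l⟩ - hkl
    split_ifs with hle
    · have hx' : ¬(x = (k, l) ∨ x = (l, k)) := by
        simp only [ne_eq, Prod.mk.injEq] at hkl hle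
        rcases hx with rfl | rfl <;> simp only [Prod.mk.injEq] <;> omega
      simp [dicke_apply, hx']
    · rfl
  · simp

theorem rhoDS_apply {d : ℕ} (p : Fin d → Fin d → ℝ) (x y : Fin d × Fin d) :
    rhoDS p x y = if y = x ∨ y = x.swap then (Mds p x.1 x.2 : ℂ) else 0 := by
  obtain ⟨a, b⟩ := x
  rcases le_total a b with h | h
  · exact rhoDS_apply_of_le p h (Or.inl rfl) y
  · rw [rhoDS_apply_of_le p h (Or.inr rfl), Mds_comm]
    simp [or_comm]

theorem partialTransposeB_rhoDS {d : ℕ} (p : Fin d → Fin d → ℝ) :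
    partialTransposeB (rhoDS p) =
      diagEmbedding (Fin d) * (Mds p).map ((↑) : ℝ → ℂ) * (diagEmbedding (Fin d))ᴴ +
        diagonal fun x => if x.1 = x.2 then 0 else (Mds p x.1 x.2 : ℂ) := by
  ext ⟨a, b⟩ ⟨c, e⟩
  simp only [partialTransposeB, rhoDS_apply, diagEmbedding_mul_mul_conjTranspose_apply,
    Matrix.add_apply, of_apply, map_apply, diagonal_apply, Prod.mk.injEq, Prod.swap_prod_mk]
  rcases eq_or_ne a c with rfl | hac <;> rcases eq_or_ne b e with rfl | hbe <;>
    rcases eq_or_ne a b with rfl | hab <;> simp_all [eq_comm]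

theorem partialTransposeB_rhoDS_submatrix_diag {d : ℕ} (p : Fin d → Fin d → ℝ) :
    (partialTransposeB (rhoDS p)).submatrix (fun i => (i, i)) (fun i => (i, i)) =
      (Mds p).map ((↑) : ℝ → ℂ) := by
  ext i j
  simp [partialTransposeB, rhoDS_apply]

theorem rhoDS_ppt_iff_Mds_general {d : ℕ} (p : Fin d → Fin d → ℝ)
    (hp0 : ∀ i j : Fin d, i ≤ j → 0 ≤ p i j) :
    ((partialTransposeB (rhoDS p)).PosSemidef ↔ (Mds p).PosSemidef) ∧
    (∀ i j, 0 ≤ Mds p i j) ∧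
    ((partialTransposeB (rhoDS p)).PosSemidef ↔
      ((Mds p).PosSemidef ∧ ∀ i j, 0 ≤ Mds p i j)) := by
  have hM_nonneg : ∀ i j, 0 ≤ Mds p i j := Mds_nonneg hp0
  have ppt_iff : (partialTransposeB (rhoDS p)).PosSemidef ↔ (Mds p).PosSemidef := by
    refine ⟨fun h => ?_, fun hM => ?_⟩
    · rw [← posSemidef_map_ofReal_iff, ← partialTransposeB_rhoDS_submatrix_diag]
      exact h.submatrix _
    · rw [partialTransposeB_rhoDS]
      refine ((posSemidef_map_ofReal_iff.2 hM).mul_mul_conjTranspose_same _).add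
        (PosSemidef.diagonal fun x => ?_)
      dsimp only
      split_ifs
      exacts [le_rfl, Complex.zero_le_real.2 (hM_nonneg _ _)]
  exact ⟨ppt_iff, hM_nonneg, ppt_iff.trans (and_iff_left hM_nonneg).symm⟩

/-- The partial transpose of a DS state is positive semidefinite iff `M_d(ρ_DS)` is
positive semidefinite; since `M_d(ρ_DS)` is automatically entrywise nonnegative,
`ρ_DS` is PPT iff `M_d(ρ_DS)` is doubly nonnegative. -/
theorem rhoDS_ppt_iff_Mds {d : ℕ} (p : Fin d → Fin d → ℝ)
    (hp0 : ∀ i j : Fin d, i ≤ j → 0 ≤ p i j)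
    (hp1 : ∑ i : Fin d, ∑ j : Fin d, (if i ≤ j then p i j else 0) = 1) :
    ((partialTransposeB (rhoDS p)).PosSemidef ↔ (Mds p).PosSemidef) ∧
    (∀ i j, 0 ≤ Mds p i j) ∧
    ((partialTransposeB (rhoDS p)).PosSemidef ↔
      ((Mds p).PosSemidef ∧ ∀ i j, 0 ≤ Mds p i j)) :=
  rhoDS_ppt_iff_Mds_general p hp0
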